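/- arXiv:0710.4593 — 3 statements merged into one kernel-verified Lean document; each statement's English description precedes it below -/
import Mathlib

section
/- For every finitely generated group G with finite symmetric generating set S, every integer R ≥ 1, and every function f : B_G(3R) → ℝ on the ball of radius 3R in G (with word metric from S), one has ∑_{x ∈ B_G(R)} |f(x) - f_R|² ≤ 8 |S|² R² (|B_G(2R)|/|B_G(R)|) ∑_{x ∈ B_G(3R-1)} ∑_{s ∈ S} |f(xs) - f(x)|², where f_R is the average of f over B_G(R). -/
open Finset

/-- The ball of radius `n` in the Cayley graph of a group with generating set `S`:
elements expressible as products of at most `n` generators. -/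
def groupBall {G : Type*} [Group G] [DecidableEq G] (S : Finset G) : ℕ → Finset G
  | 0 => {1}
  | (n + 1) => groupBall S n ∪ (groupBall S n).biUnion fun g => S.image fun s => g * s

section Aux

variable {G : Type*} [Group G] [DecidableEq G] (S : Finset G)

lemma groupBall_subset_succ (n : ℕ) : groupBall S n ⊆ groupBall S (n + 1) := by
  show groupBall S n ⊆ groupBall S n ∪ _
  exact Finset.subset_union_left

lemma groupBall_mono {m n : ℕ} (h : m ≤ n) : groupBall S m ⊆ groupBall S n := by
  induction n, h using Nat.le_induction with
  | base => exact subset_rfl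
  | succ n hmn ih => exact ih.trans (groupBall_subset_succ S n)

lemma one_mem_groupBall (n : ℕ) : (1 : G) ∈ groupBall S n :=
  groupBall_mono S (Nat.zero_le n) (by simp [groupBall])

lemma mul_mem_groupBall_succ {g s : G} {n : ℕ} (hg : g ∈ groupBall S n) (hs : s ∈ S) :
    g * s ∈ groupBall S (n + 1) := by
  show g * s ∈ groupBall S n ∪ _
  exact Finset.mem_union_right _
    (Finset.mem_biUnion.2 ⟨g, hg, Finset.mem_image.2 ⟨s, hs, rfl⟩⟩)

lemma prod_mem_groupBall : ∀ (l : List G), (∀ s ∈ l, s ∈ S) → l.prod ∈ groupBall S l.length := by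
  intro l
  induction l using List.reverseRecOn with
  | nil => intro _; simpa using one_mem_groupBall S 0
  | append_singleton l s ih =>
    intro h
    rw [List.prod_append, List.prod_singleton, List.length_append, List.length_singleton]
    exact mul_mem_groupBall_succ S (ih fun x hx => h x (List.mem_append_left _ hx))
      (h s (List.mem_append_right _ (List.mem_singleton_self s)))

lemma exists_word {x : G} {n : ℕ} (hx : x ∈ groupBall S n) :
    ∃ l : List G, (∀ s ∈ l, s ∈ S) ∧ l.length ≤ n ∧ l.prod = x := by
  induction n generalizing x with
  | zero =>
    simp only [groupBall, Finset.mem_singleton] at hx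
    exact ⟨[], by simp, by simp, by simp [hx]⟩
  | succ n ih =>
    rcases Finset.mem_union.1 hx with hx | hx
    · obtain ⟨l, h1, h2, h3⟩ := ih hx
      exact ⟨l, h1, h2.trans (Nat.le_succ n), h3⟩
    · obtain ⟨g, hg, hgs⟩ := Finset.mem_biUnion.1 hx
      obtain ⟨s, hs, rfl⟩ := Finset.mem_image.1 hgs
      obtain ⟨l, h1, h2, h3⟩ := ih hg
      refine ⟨l ++ [s], ?_, ?_, ?_⟩
      · intro t ht
        rcases List.mem_append.1 ht with h | h
        · exact h1 t h
        · rw [List.mem_singleton] at h; subst h; exact hs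
      · simpa using Nat.succ_le_succ h2
      · simp [h3]

lemma mul_mem_groupBall_add {a b : G} {m n : ℕ} (ha : a ∈ groupBall S m)
    (hb : b ∈ groupBall S n) : a * b ∈ groupBall S (m + n) := by
  obtain ⟨la, ha1, ha2, ha3⟩ := exists_word S ha
  obtain ⟨lb, hb1, hb2, hb3⟩ := exists_word S hb
  have h := prod_mem_groupBall S (la ++ lb) (by
    intro t ht; rcases List.mem_append.1 ht with h | h
    exacts [ha1 t h, hb1 t h])
  rw [List.prod_append, ha3, hb3, List.length_append] at h
  exact groupBall_mono S (Nat.add_le_add ha2 hb2) h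

lemma inv_mem_groupBall (hsymm : ∀ s ∈ S, s⁻¹ ∈ S) {a : G} {n : ℕ}
    (ha : a ∈ groupBall S n) : a⁻¹ ∈ groupBall S n := by
  obtain ⟨l, h1, h2, h3⟩ := exists_word S ha
  have h := prod_mem_groupBall S ((l.map fun x => x⁻¹).reverse) (by
    intro t ht
    rw [List.mem_reverse, List.mem_map] at ht
    obtain ⟨s, hs, rfl⟩ := ht
    exact hsymm s (h1 s hs))
  rw [← List.prod_inv_reverse, h3] at h
  rw [List.length_reverse, List.length_map] at h
  exact groupBall_mono S h2 h

lemma groupBall_empty (G : Type*) [Group G] [DecidableEq G] (n : ℕ) :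
    groupBall (∅ : Finset G) n = {1} := by
  induction n with
  | zero => rfl
  | succ n ih => show groupBall _ n ∪ _ = _; simp [ih]

end Aux

/-- Poincaré inequality for finitely generated groups (Theorem 2.1 / thmpi). -/
theorem poincare_inequality {G : Type*} [Group G] [DecidableEq G] (S : Finset G)
    (hsymm : ∀ s ∈ S, s⁻¹ ∈ S) (hgen : Subgroup.closure (S : Set G) = ⊤)
    (R : ℕ) (hR : 1 ≤ R) (f : G → ℝ) (fR : ℝ)
    (hfR : fR = (∑ x ∈ groupBall S R, f x) / ((groupBall S R).card : ℝ)) :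
    ∑ x ∈ groupBall S R, (f x - fR) ^ 2 ≤
      8 * (S.card : ℝ) ^ 2 * (R : ℝ) ^ 2 *
        (((groupBall S (2 * R)).card : ℝ) / ((groupBall S R).card : ℝ)) *
        ∑ x ∈ groupBall S (3 * R - 1), ∑ s ∈ S, (f (x * s) - f x) ^ 2 := by
  classical
  rcases eq_or_ne S ∅ with hS | hS
  · subst hS
    simp only [groupBall_empty, Finset.sum_singleton, Finset.card_singleton, Nat.cast_one,
      Finset.sum_empty] at *
    rw [hfR]
    norm_num
  have hScard : (1 : ℝ) ≤ (S.card : ℝ) := by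
    have : 1 ≤ S.card := Finset.card_pos.2 (Finset.nonempty_iff_ne_empty.2 hS)
    exact_mod_cast this
  set B1 := groupBall S R with hB1
  have hN0 : 0 < B1.card := Finset.card_pos.2 ⟨1, one_mem_groupBall S R⟩
  set N : ℝ := (B1.card : ℝ) with hNdef
  have hN : (0 : ℝ) < N := Nat.cast_pos.mpr hN0
  set E := ∑ x ∈ groupBall S (3 * R - 1), ∑ s ∈ S, (f (x * s) - f x) ^ 2 with hEdef
  have hE0 : 0 ≤ E := Finset.sum_nonneg fun _ _ => Finset.sum_nonneg fun _ _ => sq_nonneg _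
  -- Step A: pointwise bound through the mean
  have stepA : ∀ x : G, (f x - fR) ^ 2 ≤ (1 / N) * ∑ y ∈ B1, (f x - f y) ^ 2 := by
    intro x
    have h1 : f x - fR = (1 / N) * ∑ y ∈ B1, (f x - f y) := by
      rw [hfR, Finset.sum_sub_distrib, Finset.sum_const, nsmul_eq_mul, ← hNdef]
      field_simp
    have h2 : (∑ y ∈ B1, (f x - f y)) ^ 2 ≤ N * ∑ y ∈ B1, (f x - f y) ^ 2 :=
      sq_sum_le_card_mul_sum_sq
    calc (f x - fR) ^ 2 = (1 / N) ^ 2 * (∑ y ∈ B1, (f x - f y)) ^ 2 := by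
          rw [h1, mul_pow]
      _ ≤ (1 / N) ^ 2 * (N * ∑ y ∈ B1, (f x - f y) ^ 2) := by
          apply mul_le_mul_of_nonneg_left h2 (by positivity)
      _ = (1 / N) * ∑ y ∈ B1, (f x - f y) ^ 2 := by
          field_simp
  -- Step B: reindexing over differences
  have stepB : ∀ y ∈ B1, ∑ x ∈ B1, (f x - f y) ^ 2 ≤
      ∑ z ∈ groupBall S (2 * R), (f (y * z) - f y) ^ 2 := by
    intro y hy
    have hre : ∑ x ∈ B1, (f x - f y) ^ 2 =
        ∑ z ∈ B1.image (fun x => y⁻¹ * x), (f (y * z) - f y) ^ 2 := by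
      rw [Finset.sum_image (by intro a _ b _ h; exact mul_left_cancel h)]
      simp
    rw [hre]
    apply Finset.sum_le_sum_of_subset_of_nonneg
    · intro z hz
      obtain ⟨x, hx, rfl⟩ := Finset.mem_image.1 hz
      have h := mul_mem_groupBall_add S (inv_mem_groupBall S hsymm hy) hx
      rwa [two_mul]
    · intros; positivity
  -- Step C: energy bound along a word for each z
  have stepC : ∀ z ∈ groupBall S (2 * R),
      ∑ y ∈ B1, (f (y * z) - f y) ^ 2 ≤ (2 * R : ℝ) * ((2 * R : ℝ) * E) := by
    intro z hz
    obtain ⟨l, hl1, hl2, hl3⟩ := exists_word S hz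
    set k := l.length with hk
    have tel : ∀ y : G, f (y * z) - f y = ∑ i ∈ Finset.range k,
        (f (y * (l.take (i + 1)).prod) - f (y * (l.take i).prod)) := by
      intro y
      rw [Finset.sum_range_sub (fun i => f (y * (l.take i).prod))]
      simp only [hk, List.take_length, List.take_zero, List.prod_nil, mul_one, hl3]
    have csy : ∀ y : G, (f (y * z) - f y) ^ 2 ≤ (k : ℝ) * ∑ i ∈ Finset.range k,
        (f (y * (l.take (i + 1)).prod) - f (y * (l.take i).prod)) ^ 2 := by
      intro y
      rw [tel y]
      have h := sq_sum_le_card_mul_sum_sq (s := Finset.range k)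
        (f := fun i => f (y * (l.take (i + 1)).prod) - f (y * (l.take i).prod))
      simpa using h
    have edge : ∀ i ∈ Finset.range k,
        ∑ y ∈ B1, (f (y * (l.take (i + 1)).prod) - f (y * (l.take i).prod)) ^ 2 ≤ E := by
      intro i hi
      rw [Finset.mem_range] at hi
      set p := (l.take i).prod with hp
      have hps : (l.take (i + 1)).prod = p * l[i] := List.prod_take_succ l i hi
      have hsS : l[i] ∈ S := hl1 _ (List.getElem_mem hi)
      have hpmem : p ∈ groupBall S (2 * R - 1) := by
        have h := prod_mem_groupBall S (l.take i) (fun t ht => hl1 t (List.mem_of_mem_take ht))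
        exact groupBall_mono S (by rw [List.length_take]; omega) h
      have hre : ∑ y ∈ B1, (f (y * p * l[i]) - f (y * p)) ^ 2 =
          ∑ w ∈ B1.image (fun y => y * p), (f (w * l[i]) - f w) ^ 2 := by
        rw [Finset.sum_image (by intro a _ b _ h; exact mul_right_cancel h)]
      calc ∑ y ∈ B1, (f (y * (l.take (i + 1)).prod) - f (y * p)) ^ 2
          = ∑ w ∈ B1.image (fun y => y * p), (f (w * l[i]) - f w) ^ 2 := by
            rw [← hre]
            simp only [hps, mul_assoc]
        _ ≤ ∑ w ∈ groupBall S (3 * R - 1), (f (w * l[i]) - f w) ^ 2 := by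
            apply Finset.sum_le_sum_of_subset_of_nonneg
            · intro w hw
              obtain ⟨y, hy, rfl⟩ := Finset.mem_image.1 hw
              have h := mul_mem_groupBall_add S hy hpmem
              exact groupBall_mono S (by omega) h
            · intros; positivity
        _ ≤ E := by
            rw [hEdef]
            apply Finset.sum_le_sum
            intro w _
            exact Finset.single_le_sum (f := fun s' => (f (w * s') - f w) ^ 2) (fun s' _ => sq_nonneg _) hsS
    have hkR : (k : ℝ) ≤ 2 * R := by exact_mod_cast hl2
    calc ∑ y ∈ B1, (f (y * z) - f y) ^ 2
        ≤ ∑ y ∈ B1, (k : ℝ) * ∑ i ∈ Finset.range k,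
            (f (y * (l.take (i + 1)).prod) - f (y * (l.take i).prod)) ^ 2 :=
          Finset.sum_le_sum fun y _ => csy y
      _ = (k : ℝ) * ∑ i ∈ Finset.range k, ∑ y ∈ B1,
            (f (y * (l.take (i + 1)).prod) - f (y * (l.take i).prod)) ^ 2 := by
          rw [← Finset.mul_sum, Finset.sum_comm]
      _ ≤ (k : ℝ) * ((k : ℝ) * E) := by
          apply mul_le_mul_of_nonneg_left _ (Nat.cast_nonneg k)
          calc ∑ i ∈ Finset.range k, ∑ y ∈ B1,
                (f (y * (l.take (i + 1)).prod) - f (y * (l.take i).prod)) ^ 2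
              ≤ ∑ _i ∈ Finset.range k, E := Finset.sum_le_sum edge
            _ = (k : ℝ) * E := by rw [Finset.sum_const, Finset.card_range, nsmul_eq_mul]
      _ ≤ (2 * R : ℝ) * ((2 * R : ℝ) * E) := by
          apply mul_le_mul hkR (mul_le_mul_of_nonneg_right hkR hE0)
            (by positivity) (by positivity)
  -- Combine everything
  set M : ℝ := ((groupBall S (2 * R)).card : ℝ) with hMdef
  have hM0 : 0 ≤ M := Nat.cast_nonneg _
  have main : ∑ x ∈ B1, (f x - fR) ^ 2 ≤ (1 / N) * (M * ((2 * R : ℝ) * ((2 * R : ℝ) * E))) := by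
    calc ∑ x ∈ B1, (f x - fR) ^ 2
        ≤ ∑ x ∈ B1, (1 / N) * ∑ y ∈ B1, (f x - f y) ^ 2 :=
          Finset.sum_le_sum fun x _ => stepA x
      _ = (1 / N) * ∑ y ∈ B1, ∑ x ∈ B1, (f x - f y) ^ 2 := by
          rw [← Finset.mul_sum, Finset.sum_comm]
      _ ≤ (1 / N) * ∑ y ∈ B1, ∑ z ∈ groupBall S (2 * R), (f (y * z) - f y) ^ 2 := by
          apply mul_le_mul_of_nonneg_left _ (by positivity)
          exact Finset.sum_le_sum stepB
      _ = (1 / N) * ∑ z ∈ groupBall S (2 * R), ∑ y ∈ B1, (f (y * z) - f y) ^ 2 := by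
          rw [Finset.sum_comm]
      _ ≤ (1 / N) * ∑ _z ∈ groupBall S (2 * R), (2 * R : ℝ) * ((2 * R : ℝ) * E) := by
          apply mul_le_mul_of_nonneg_left _ (by positivity)
          exact Finset.sum_le_sum stepC
      _ = (1 / N) * (M * ((2 * R : ℝ) * ((2 * R : ℝ) * E))) := by
          rw [Finset.sum_const, nsmul_eq_mul]
  refine main.trans ?_
  have h4 : (4 : ℝ) ≤ 8 * (S.card : ℝ) ^ 2 := by nlinarith
  have key : 4 * ((R : ℝ) ^ 2 * (M * E)) ≤ 8 * (S.card : ℝ) ^ 2 * ((R : ℝ) ^ 2 * (M * E)) :=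
    mul_le_mul_of_nonneg_right h4 (by positivity)
  calc (1 / N) * (M * ((2 * R : ℝ) * ((2 * R : ℝ) * E)))
      = (4 * ((R : ℝ) ^ 2 * (M * E))) / N := by ring
    _ ≤ (8 * (S.card : ℝ) ^ 2 * ((R : ℝ) ^ 2 * (M * E))) / N := by
        exact div_le_div_of_nonneg_right key hN.le
    _ = 8 * (S.card : ℝ) ^ 2 * (R : ℝ) ^ 2 * (M / N) * E := by
        field_simp
end

section
/- Let h : ℤ≥i₀ → ℝ be a nondecreasing function with liminf_{i→∞} (h(i) - d·i·log 16) < ∞ for some d > 0. Set a = 4d·log 16 and let w be any positive integer. Then there exist integers i₁, i₂ ≥ i₀ with w < i₂ - i₁ < 3w, h(i₂+1) - h(i₁) < w·a, h(i₁+1) - h(i₁) < a, and h(i₂+1) - h(i₂) < a. -/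
/-- Telescoping lower bound: if every unit step of `f` starting at `b` is at least `c`
for `m` steps, then `f (b + m) - f b ≥ m * c`. -/
lemma tele_aux (f : ℤ → ℝ) (b : ℤ) (c : ℝ) :
    ∀ m : ℕ, (∀ j : ℕ, j < m → c ≤ f (b + j + 1) - f (b + j)) →
      (m : ℝ) * c ≤ f (b + m) - f b := by
  intro m
  induction m with
  | zero => intro _; simp
  | succ n ih =>
    intro hstep
    have h1 := ih (fun j hj => hstep j (by omega))
    have h2 := hstep n (by omega)
    have e : b + ((n : ℤ) + 1) = b + (n : ℤ) + 1 := by ring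
    push_cast
    rw [e]
    linarith

/-- Scale-selection lemma: a nondecreasing function `h` on integers `≥ i₀` whose
liminf of `h i - d·i·log 16` is finite admits scales `i₁ < i₂` with doubling behavior. -/
theorem good_scales (i₀ : ℤ) (h : ℤ → ℝ) (d : ℝ) (hd : 0 < d)
    (hmono : ∀ i j : ℤ, i₀ ≤ i → i ≤ j → h i ≤ h j)
    (hliminf : ∃ C : ℝ, ∀ N : ℤ, ∃ i : ℤ, N ≤ i ∧ i₀ ≤ i ∧ h i - d * i * Real.log 16 < C)
    (a : ℝ) (ha : a = 4 * d * Real.log 16) (w : ℕ) (hw : 1 ≤ w) :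
    ∃ i₁ i₂ : ℤ, i₀ ≤ i₁ ∧ i₀ ≤ i₂ ∧ (w : ℤ) < i₂ - i₁ ∧ i₂ - i₁ < 3 * w ∧
      h (i₂ + 1) - h i₁ < (w : ℝ) * a ∧
      h (i₁ + 1) - h i₁ < a ∧ h (i₂ + 1) - h i₂ < a := by
  obtain ⟨C, hC⟩ := hliminf
  have hL : (0:ℝ) < Real.log 16 := Real.log_pos (by norm_num)
  set L : ℝ := Real.log 16 with hLdef
  have hdL : 0 < d * L := by positivity
  have ha' : 0 < a := by rw [ha]; positivity
  have hwR : (0:ℝ) < (w:ℝ) := by exact_mod_cast hw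
  obtain ⟨g₀, hg₀N, hg₀i, hg₀C⟩ := hC i₀
  set E : ℝ := C + d * g₀ * L - h g₀ with hE
  have hEpos : 0 < E := by simp only [hE]; linarith [hg₀C]
  obtain ⟨K, hK⟩ := exists_nat_gt (3 + E / ((w:ℝ) * (d * L)))
  obtain ⟨g₁, hg₁N, hg₁i, hg₁C⟩ := hC (g₀ + 3 * w * K)
  set n : ℤ := g₁ - g₀ with hn
  have hnK : (3 * w * K : ℤ) ≤ n := by omega
  have h3w : 0 < 3 * w := by omega
  set k : ℕ := n.toNat / (3 * w) with hk
  have hnpos : (0:ℤ) ≤ n := le_trans (by positivity) hnK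
  have hntoNat : (n.toNat : ℤ) = n := Int.toNat_of_nonneg hnpos
  have hkK : K ≤ k := by
    rw [hk, Nat.le_div_iff_mul_le h3w]
    have h1 : ((K * (3 * w) : ℕ) : ℤ) ≤ (n.toNat : ℤ) := by
      rw [hntoNat]
      calc ((K * (3 * w) : ℕ) : ℤ) = 3 * (w:ℤ) * K := by push_cast; ring
        _ ≤ n := hnK
    exact_mod_cast h1
  have hkn : (3 * w * k : ℤ) ≤ n := by
    have h1 := Nat.div_mul_le_self n.toNat (3 * w)
    have h2 : (((n.toNat / (3 * w)) * (3 * w) : ℕ) : ℤ) ≤ (n.toNat : ℤ) := by exact_mod_cast h1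
    rw [hntoNat] at h2
    calc (3 * (w:ℤ) * k) = (((n.toNat / (3 * w)) * (3 * w) : ℕ) : ℤ) := by
          rw [hk]; push_cast; ring
      _ ≤ n := h2
  have hnk : n < 3 * w * (k + 1) := by
    have h1 : n.toNat / (3 * w) < k + 1 := by omega
    have h2 : n.toNat < (k + 1) * (3 * w) := (Nat.div_lt_iff_lt_mul h3w).mp h1
    have h3 : ((n.toNat : ℤ)) < (((k + 1) * (3 * w) : ℕ) : ℤ) := by exact_mod_cast h2
    rw [hntoNat] at h3
    calc n < (((k + 1) * (3 * w) : ℕ) : ℤ) := h3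
      _ = 3 * (w:ℤ) * ((k:ℤ) + 1) := by push_cast; ring
  -- growth bound up to g₁
  have hgrow : h g₁ - h g₀ < d * L * n + E := by
    have h1 : h g₁ - d * g₁ * L < C := hg₁C
    have e : d * L * ((n:ℤ):ℝ) + E = C + d * g₁ * L - h g₀ := by
      rw [hE, hn]; push_cast; ring
    rw [e]; linarith
  -- some block of length 3w is cheap
  have hblock : ∃ j : ℕ, j < k ∧
      h (g₀ + 3 * w * j + 3 * w) - h (g₀ + 3 * w * j) < (w:ℝ) * a := by
    by_contra hcon
    push_neg at hcon
    have htel := tele_aux (fun t => h (g₀ + 3 * w * t)) 0 ((w:ℝ) * a) k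
      (fun j hj => by
        have h1 := hcon j hj
        have e3 : g₀ + 3 * w * (0 + (j:ℤ) + 1) = g₀ + 3 * w * j + 3 * w := by ring
        have e4 : g₀ + 3 * w * (0 + (j:ℤ)) = g₀ + 3 * w * j := by ring
        rw [e3, e4]
        exact h1)
    have e5 : g₀ + 3 * w * (0 + (k:ℤ)) = g₀ + 3 * w * k := by ring
    have e6 : g₀ + 3 * w * (0:ℤ) = g₀ := by ring
    rw [e5, e6] at htel
    have hle : h (g₀ + 3 * w * k) ≤ h g₁ := by
      have hp : (0:ℤ) ≤ 3 * (w:ℤ) * k := by positivity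
      apply hmono
      · linarith
      · linarith [hkn]
    -- numeric contradiction
    have hEb : E < ((K:ℝ) - 3) * ((w:ℝ) * (d * L)) := by
      have h2 : E / ((w:ℝ) * (d * L)) < (K:ℝ) - 3 := by linarith
      have h3 : 0 < (w:ℝ) * (d * L) := by positivity
      calc E = E / ((w:ℝ) * (d * L)) * ((w:ℝ) * (d * L)) := by field_simp
        _ < ((K:ℝ) - 3) * ((w:ℝ) * (d * L)) := by
            apply mul_lt_mul_of_pos_right h2 h3
    have hnkR : (n:ℝ) < 3 * w * ((k:ℝ) + 1) := by exact_mod_cast hnk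
    have hKkR : (K:ℝ) ≤ (k:ℝ) := by exact_mod_cast hkK
    have hchain : (k:ℝ) * ((w:ℝ) * a) < d * L * (3 * w * ((k:ℝ) + 1)) + E := by
      have := mul_lt_mul_of_pos_left hnkR hdL
      linarith
    rw [ha] at hchain
    nlinarith [hchain, hEb, mul_le_mul_of_nonneg_right hKkR (le_of_lt (mul_pos hwR hdL)),
      hdL, hwR]
  obtain ⟨j, hjk, hcheap⟩ := hblock
  set b : ℤ := g₀ + 3 * w * j with hb
  have hbi : i₀ ≤ b := by
    have hp : (0:ℤ) ≤ 3 * (w:ℤ) * j := by positivity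
    rw [hb]; linarith
  -- light step in the first third
  have hA : ∃ i₁ : ℤ, b ≤ i₁ ∧ i₁ < b + w ∧ h (i₁ + 1) - h i₁ < a := by
    by_contra hcon
    push_neg at hcon
    have htel := tele_aux h b a w (fun p hp => by
      apply hcon
      · omega
      · omega)
    have hle : h (b + w) ≤ h (b + 3 * w) := hmono _ _ (by omega) (by omega)
    have hc : h (b + 3 * w) - h b < (w:ℝ) * a := hcheap
    linarith
  -- light step in the last third
  have hB : ∃ i₂ : ℤ, b + 2 * w ≤ i₂ ∧ i₂ < b + 3 * w ∧ h (i₂ + 1) - h i₂ < a := by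
    by_contra hcon
    push_neg at hcon
    have htel := tele_aux h (b + 2 * w) a w (fun p hp => by
      apply hcon
      · omega
      · omega)
    have e : b + 2 * (w:ℤ) + (w:ℤ) = b + 3 * w := by ring
    rw [e] at htel
    have hle : h b ≤ h (b + 2 * w) := hmono _ _ hbi (by omega)
    have hc : h (b + 3 * w) - h b < (w:ℝ) * a := hcheap
    linarith
  obtain ⟨i₁, hi₁l, hi₁u, hi₁s⟩ := hA
  obtain ⟨i₂, hi₂l, hi₂u, hi₂s⟩ := hB
  refine ⟨i₁, i₂, by omega, by omega, by omega, by omega, ?_, hi₁s, hi₂s⟩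
  have h1 : h (i₂ + 1) ≤ h (b + 3 * w) := hmono _ _ (by omega) (by omega)
  have h2 : h b ≤ h i₁ := hmono _ _ hbi hi₁l
  have hc : h (b + 3 * w) - h b < (w:ℝ) * a := hcheap
  linarith
end

section
/- Let G act by affine isometries on a Hilbert space H with finite symmetric generating set S and energy E(x) = ∑_{s∈S} ‖s·x − x‖². Suppose there are constants D > 0 and λ ∈ (0,1) such that for every x ∈ H there exists x' with ‖x' − x‖ ≤ D·√(E(x)) and E(x') ≤ λ·E(x). Then for every x₀ ∈ H there is a fixed point x∞ of the G-action with ‖x∞ − x₀‖ ≤ D·√(E(x₀)) / (1 − √λ). -/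
open Finset

/-- If the energy of an affine isometric action can always be contracted by a
factor `λ < 1` after moving distance at most `D√(E(x))`, then the action has,
for each `x₀`, a fixed point within distance `D√(E(x₀))/(1-√λ)` of `x₀`. -/
theorem fixed_point_of_energy_contraction (G : Type*) [Group G] (H : Type*)
    [NormedAddCommGroup H] [InnerProductSpace ℝ H] [CompleteSpace H]
    (ρ : G →* (H ≃ᵃⁱ[ℝ] H)) (S : Finset G)
    (hsymm : ∀ s ∈ S, s⁻¹ ∈ S) (hgen : Subgroup.closure (S : Set G) = ⊤)
    (E : H → ℝ) (hE : E = fun x => ∑ s ∈ S, ‖ρ s x - x‖ ^ 2)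
    (D lam : ℝ) (hD : 0 < D) (hlam0 : 0 < lam) (hlam1 : lam < 1)
    (hstep : ∀ x : H, ∃ x' : H, ‖x' - x‖ ≤ D * Real.sqrt (E x) ∧ E x' ≤ lam * E x) :
    ∀ x₀ : H, ∃ xinf : H, (∀ g : G, ρ g xinf = xinf) ∧
      ‖xinf - x₀‖ ≤ D * Real.sqrt (E x₀) / (1 - Real.sqrt lam) := by
  intro x₀
  have hEnonneg : ∀ y : H, 0 ≤ E y := by
    intro y; rw [hE]; exact Finset.sum_nonneg fun s _ => sq_nonneg _
  -- the iterated sequence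
  set x : ℕ → H := fun n => Nat.rec x₀ (fun _ y => Classical.choose (hstep y)) n with hx
  have hx0 : x 0 = x₀ := rfl
  have hxs : ∀ n, x (n + 1) = Classical.choose (hstep (x n)) := fun n => rfl
  have h1 : ∀ n, ‖x (n + 1) - x n‖ ≤ D * Real.sqrt (E (x n)) := by
    intro n; rw [hxs]; exact (Classical.choose_spec (hstep (x n))).1
  have h2 : ∀ n, E (x (n + 1)) ≤ lam * E (x n) := by
    intro n; rw [hxs]; exact (Classical.choose_spec (hstep (x n))).2
  have hEk : ∀ n, E (x n) ≤ lam ^ n * E x₀ := by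
    intro n
    induction n with
    | zero => simp [hx0]
    | succ n ih =>
      calc E (x (n + 1)) ≤ lam * E (x n) := h2 n
        _ ≤ lam * (lam ^ n * E x₀) := by
            exact mul_le_mul_of_nonneg_left ih hlam0.le
        _ = lam ^ (n + 1) * E x₀ := by ring
  have hsl0 : 0 ≤ Real.sqrt lam := Real.sqrt_nonneg lam
  have hsl1 : Real.sqrt lam < 1 := by
    rw [show (1 : ℝ) = Real.sqrt 1 by simp]
    exact Real.sqrt_lt_sqrt hlam0.le hlam1
  have hdist : ∀ n, dist (x n) (x (n + 1)) ≤ (D * Real.sqrt (E x₀)) * Real.sqrt lam ^ n := by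
    intro n
    rw [dist_eq_norm, norm_sub_rev]
    calc ‖x (n + 1) - x n‖ ≤ D * Real.sqrt (E (x n)) := h1 n
      _ ≤ D * Real.sqrt (lam ^ n * E x₀) := by
          exact mul_le_mul_of_nonneg_left (Real.sqrt_le_sqrt (hEk n)) hD.le
      _ = (D * Real.sqrt (E x₀)) * Real.sqrt lam ^ n := by
          have hpow : lam ^ n = (Real.sqrt lam ^ n) ^ 2 := by
            rw [← pow_mul, mul_comm, pow_mul, Real.sq_sqrt hlam0.le]
          rw [Real.sqrt_mul (pow_nonneg hlam0.le n), hpow,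
            Real.sqrt_sq (pow_nonneg hsl0 n)]
          ring
  have hcauchy : CauchySeq x :=
    cauchySeq_of_le_geometric (Real.sqrt lam) (D * Real.sqrt (E x₀)) hsl1 hdist
  obtain ⟨xinf, hxinf⟩ := cauchySeq_tendsto_of_complete hcauchy
  -- energy of the limit is zero
  have hEcont : Continuous E := by
    rw [hE]
    exact continuous_finset_sum _ fun s _ =>
      ((((ρ s).continuous).sub continuous_id).norm.pow 2)
  have hEtend : Filter.Tendsto (fun n => E (x n)) Filter.atTop (nhds (E xinf)) :=
    (hEcont.tendsto xinf).comp hxinf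
  have hEzero : E xinf = 0 := by
    have htend0 : Filter.Tendsto (fun n => lam ^ n * E x₀) Filter.atTop (nhds 0) := by
      simpa using (tendsto_pow_atTop_nhds_zero_of_lt_one hlam0.le hlam1).mul_const (E x₀)
    have hle : E xinf ≤ 0 :=
      le_of_tendsto_of_tendsto hEtend htend0 (Filter.Eventually.of_forall hEk)
    exact le_antisymm hle (hEnonneg xinf)
  -- fixed by each generator, hence by all of G
  have hfixS : ∀ s ∈ S, ρ s xinf = xinf := by
    intro s hs
    have := (Finset.sum_eq_zero_iff_of_nonneg
      (fun t _ => sq_nonneg (‖ρ t xinf - xinf‖))).mp (by rw [hE] at hEzero; exact hEzero) s hs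
    have hnorm : ‖ρ s xinf - xinf‖ = 0 := by
      have := sq_eq_zero_iff.mp this
      exact this
    exact sub_eq_zero.mp (norm_eq_zero.mp hnorm)
  have hfix : ∀ g : G, ρ g xinf = xinf := by
    intro g
    have hg : g ∈ Subgroup.closure (S : Set G) := by rw [hgen]; trivial
    refine Subgroup.closure_induction (fun s hs => hfixS s hs) ?_ ?_ ?_ hg
    · simp
    · intro a b _ _ ha hb
      rw [map_mul, AffineIsometryEquiv.coe_mul, Function.comp_apply, hb, ha]
    · intro a _ ha
      calc ρ a⁻¹ xinf = ρ a⁻¹ (ρ a xinf) := by rw [ha]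
        _ = xinf := by
            rw [← Function.comp_apply (f := ⇑(ρ a⁻¹)), ← AffineIsometryEquiv.coe_mul,
              ← map_mul, inv_mul_cancel, map_one, AffineIsometryEquiv.coe_one, id]
  refine ⟨xinf, hfix, ?_⟩
  have := dist_le_of_le_geometric_of_tendsto₀ (Real.sqrt lam) (D * Real.sqrt (E x₀)) hsl1
    hdist hxinf
  rw [← dist_eq_norm, dist_comm]
  simpa [hx0, div_eq_mul_inv] using this
end
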